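/- The relative entropy of contextuality is subadditive under independent juxtapositions: for behaviors B1 in a scenario S1 and B2 in a scenario S2, with NC(S1), NC(S2) and NC(S1 ⊗ S2) nonempty, one has KL(B1 ⊗ B2) ≤ KL(B1) + KL(B2), where KL(B1 ⊗ B2) is computed in the juxtaposed scenario S1 ⊗ S2. -/

import Mathlib

/-!
If `q1` and `q2` are noncontextual, so is `q1 ⊗ q2` in `S1 ⊗ S2`: the product of ontological
models respects every equivalence of the juxtaposed scenario, because each such equivalence is
the tensor product of an equivalence of one factor with a distribution, so the relevant sums
factorise. The KL divergence of a product of distributions is the sum of the divergences, hence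
`D(B1 ⊗ B2 ‖ q1 ⊗ q2) ≤ D(B1 ‖ q1) + D(B2 ‖ q2)`, and taking infima over `q1`, `q2` gives the
claim. Passing to the infima in `EReal` needs both relative entropies to be `≠ ⊥`, which follows
from Gibbs' inequality `p log (p / q) ≥ p - q`.
-/

open scoped BigOperators

/-- A probability distribution on a finite type. -/
def IsDist {X : Type} [Fintype X] (f : X → ℝ) : Prop :=
  (∀ x, 0 ≤ f x) ∧ ∑ x, f x = 1

lemma isDist_prodFun {A B : Type} [Fintype A] [Fintype B] {f : A → ℝ} {g : B → ℝ}
    (hf : IsDist f) (hg : IsDist g) :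
    IsDist (fun x : A × B => f x.1 * g x.2) := by
  refine ⟨fun x => mul_nonneg (hf.1 x.1) (hg.1 x.2), ?_⟩
  calc ∑ x : A × B, f x.1 * g x.2 = ∑ a, ∑ b, f a * g b := by
        rw [Fintype.sum_prod_type]
    _ = (∑ a, f a) * (∑ b, g b) := by rw [Finset.sum_mul_sum]
    _ = 1 := by rw [hf.2, hg.2, mul_one]

lemma isDist_prodFun' {K1 J1 K2 J2 : Type} [Fintype K1] [Fintype J1] [Fintype K2] [Fintype J2]
    {f : K1 × J1 → ℝ} {g : K2 × J2 → ℝ} (hf : IsDist f) (hg : IsDist g) :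
    IsDist (fun kj : (K1 × K2) × (J1 × J2) => f (kj.1.1, kj.2.1) * g (kj.1.2, kj.2.2)) := by
  refine ⟨fun kj => mul_nonneg (hf.1 _) (hg.1 _), ?_⟩
  have h := (isDist_prodFun hf hg).2
  rw [← h]
  exact Fintype.sum_equiv (Equiv.prodProdProdComm K1 K2 J1 J2) _ _ (by rintro ⟨⟨a, b⟩, c, d⟩; rfl)

/-- A prepare-and-measure scenario: finite nonempty sets of preparations `I`,
measurements `J` and outcomes `K` (carried as type-class assumptions on the index
types), together with a family of preparation operational equivalences (pairs of
probability distributions on `I`) and a family of measurement operational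
equivalences (pairs of probability distributions on `K × J`). -/
structure Scenario (I J K : Type) [Fintype I] [Fintype J] [Fintype K] where
  PE : Type
  ME : Type
  prepEq : PE → (I → ℝ) × (I → ℝ)
  measEq : ME → (K × J → ℝ) × (K × J → ℝ)
  prep_dist : ∀ s, IsDist (prepEq s).1 ∧ IsDist (prepEq s).2
  meas_dist : ∀ r, IsDist (measEq r).1 ∧ IsDist (measEq r).2

/-- A behavior: a family `p k ∣ j, i` of nonnegative reals, normalized over outcomes. -/
def IsBehavior {I J K : Type} [Fintype I] [Fintype J] [Fintype K]
    (p : I → J → K → ℝ) : Prop :=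
  (∀ i j k, 0 ≤ p i j k) ∧ ∀ i j, ∑ k, p i j k = 1

/-- A behavior is noncontextual in a scenario `S` if it admits a universally
noncontextual ontological model over a finite ontic space. -/
def Noncontextual {I J K : Type} [Fintype I] [Fintype J] [Fintype K]
    (S : Scenario I J K) (p : I → J → K → ℝ) : Prop :=
  ∃ (n : ℕ) (μ : I → Fin n → ℝ) (ξ : Fin n → J → K → ℝ),
    (∀ i, IsDist (μ i)) ∧
    (∀ l j, IsDist (ξ l j)) ∧
    (∀ i j k, p i j k = ∑ l, ξ l j k * μ i l) ∧
    (∀ s l, ∑ i, ((S.prepEq s).1 i - (S.prepEq s).2 i) * μ i l = 0) ∧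
    (∀ r l, ∑ kj : K × J, ((S.measEq r).1 kj - (S.measEq r).2 kj) * ξ l kj.2 kj.1 = 0)

/-- The juxtaposition of two behaviors. -/
def prodBehavior {I1 J1 K1 I2 J2 K2 : Type}
    [Fintype I1] [Fintype J1] [Fintype K1] [Fintype I2] [Fintype J2] [Fintype K2]
    (p1 : I1 → J1 → K1 → ℝ) (p2 : I2 → J2 → K2 → ℝ) :
    I1 × I2 → J1 × J2 → K1 × K2 → ℝ :=
  fun i j k => p1 i.1 j.1 k.1 * p2 i.2 j.2 k.2

/-- The juxtaposition `S1 ⊗ S2` of two scenarios: preparation (resp. measurement)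
equivalences are all pairs `(α ⊗ γ, β ⊗ γ)` with `(α, β)` an equivalence of `S1` and
`γ` an arbitrary distribution on the preparations (resp. measurement events) of `S2`,
together with the symmetric ones coming from `S2`. -/
def Scenario.prod {I1 J1 K1 I2 J2 K2 : Type}
    [Fintype I1] [Fintype J1] [Fintype K1] [Fintype I2] [Fintype J2] [Fintype K2]
    (S1 : Scenario I1 J1 K1) (S2 : Scenario I2 J2 K2) :
    Scenario (I1 × I2) (J1 × J2) (K1 × K2) where
  PE := (S1.PE × {γ : I2 → ℝ // IsDist γ}) ⊕ (S2.PE × {γ : I1 → ℝ // IsDist γ})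
  ME := (S1.ME × {γ : K2 × J2 → ℝ // IsDist γ}) ⊕ (S2.ME × {γ : K1 × J1 → ℝ // IsDist γ})
  prepEq := fun e =>
    match e with
    | Sum.inl (s, γ) =>
        (fun i => (S1.prepEq s).1 i.1 * γ.1 i.2, fun i => (S1.prepEq s).2 i.1 * γ.1 i.2)
    | Sum.inr (s, γ) =>
        (fun i => γ.1 i.1 * (S2.prepEq s).1 i.2, fun i => γ.1 i.1 * (S2.prepEq s).2 i.2)
  measEq := fun e =>
    match e with
    | Sum.inl (r, γ) =>
        (fun kj => (S1.measEq r).1 (kj.1.1, kj.2.1) * γ.1 (kj.1.2, kj.2.2),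
         fun kj => (S1.measEq r).2 (kj.1.1, kj.2.1) * γ.1 (kj.1.2, kj.2.2))
    | Sum.inr (r, γ) =>
        (fun kj => γ.1 (kj.1.1, kj.2.1) * (S2.measEq r).1 (kj.1.2, kj.2.2),
         fun kj => γ.1 (kj.1.1, kj.2.1) * (S2.measEq r).2 (kj.1.2, kj.2.2))
  prep_dist := by
    rintro (⟨s, γ⟩ | ⟨s, γ⟩)
    · exact ⟨isDist_prodFun (S1.prep_dist s).1 γ.2, isDist_prodFun (S1.prep_dist s).2 γ.2⟩
    · exact ⟨isDist_prodFun γ.2 (S2.prep_dist s).1, isDist_prodFun γ.2 (S2.prep_dist s).2⟩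
  meas_dist := by
    rintro (⟨r, γ⟩ | ⟨r, γ⟩)
    · exact ⟨isDist_prodFun' (S1.meas_dist r).1 γ.2, isDist_prodFun' (S1.meas_dist r).2 γ.2⟩
    · exact ⟨isDist_prodFun' γ.2 (S2.meas_dist r).1, isDist_prodFun' γ.2 (S2.meas_dist r).2⟩

/-- A free operation: a pre-processing of preparations, a pre-processing of
measurement choices and, for each simulated measurement, a post-processing of the
outcomes, all given by stochastic maps. -/
structure FreeOp (I J K I' J' K' : Type)
    [Fintype I] [Fintype J] [Fintype K] [Fintype I'] [Fintype J'] [Fintype K'] where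
  qP : I' → I → ℝ
  qM : J' → J → ℝ
  qO : J' → K → K' → ℝ
  qP_dist : ∀ i', IsDist (qP i')
  qM_dist : ∀ j', IsDist (qM j')
  qO_dist : ∀ j' k, IsDist (qO j' k)

/-- Action of a free operation on a behavior. -/
def FreeOp.apply {I J K I' J' K' : Type}
    [Fintype I] [Fintype J] [Fintype K] [Fintype I'] [Fintype J'] [Fintype K']
    (T : FreeOp I J K I' J' K') (p : I → J → K → ℝ) : I' → J' → K' → ℝ :=
  fun i' j' k' => ∑ i, ∑ j, ∑ k, T.qO j' k k' * p i j k * T.qM j' j * T.qP i' i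

/-- `T` lifts the operational equivalences of `S'` to those of `S`. -/
def LiftsEquivalences {I J K I' J' K' : Type}
    [Fintype I] [Fintype J] [Fintype K] [Fintype I'] [Fintype J'] [Fintype K']
    (S : Scenario I J K) (S' : Scenario I' J' K') (T : FreeOp I J K I' J' K') : Prop :=
  (∀ s' : S'.PE, ∃ s : S.PE, ∀ i : I,
      ∑ i' : I', ((S'.prepEq s').1 i' - (S'.prepEq s').2 i') * T.qP i' i
        = (S.prepEq s).1 i - (S.prepEq s).2 i) ∧
  (∀ r' : S'.ME, ∃ r : S.ME, ∀ k : K, ∀ j : J,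
      ∑ kj' : K' × J', ((S'.measEq r').1 kj' - (S'.measEq r').2 kj') *
          (T.qO kj'.2 k kj'.1 * T.qM kj'.2 j)
        = (S.measEq r).1 (k, j) - (S.measEq r).2 (k, j))

/-- The contextual fraction. -/
noncomputable def ctxFraction {I J K : Type} [Fintype I] [Fintype J] [Fintype K]
    (S : Scenario I J K) (p : I → J → K → ℝ) : ℝ :=
  1 - sSup {l : ℝ | 0 ≤ l ∧ l ≤ 1 ∧ ∃ q q' : I → J → K → ℝ,
      Noncontextual S q ∧ IsBehavior q' ∧
      ∀ i j k, p i j k = l * q i j k + (1 - l) * q' i j k}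

/-- The robustness of contextuality. -/
noncomputable def robustness {I J K : Type} [Fintype I] [Fintype J] [Fintype K]
    (S : Scenario I J K) (p : I → J → K → ℝ) : ℝ :=
  sInf {l : ℝ | 0 ≤ l ∧ l ≤ 1 ∧ ∃ q : I → J → K → ℝ, Noncontextual S q ∧
      Noncontextual S (fun i j k => l * q i j k + (1 - l) * p i j k)}

/-- The robustness with respect to a fixed reference behavior. -/
noncomputable def refRobustness {I J K : Type} [Fintype I] [Fintype J] [Fintype K]
    (S : Scenario I J K) (pref p : I → J → K → ℝ) : ℝ :=
  sInf {l : ℝ | 0 ≤ l ∧ l ≤ 1 ∧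
      Noncontextual S (fun i j k => l * pref i j k + (1 - l) * p i j k)}

/-- One term of the Kullback-Leibler divergence, with the conventions
`0 log (0/q) = 0` and `p log (p/0) = ∞` for `p > 0`. -/
noncomputable def klTerm (p q : ℝ) : EReal :=
  if p = 0 then 0 else if q = 0 then ⊤ else ((p * Real.log (p / q) : ℝ) : EReal)

/-- KL divergence between behaviors: maximum over preparations and measurements. -/
noncomputable def DKL {I J K : Type} [Fintype I] [Fintype J] [Fintype K]
    (p q : I → J → K → ℝ) : EReal :=
  ⨆ i : I, ⨆ j : J, ∑ k : K, klTerm (p i j k) (q i j k)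

/-- The relative entropy of contextuality. -/
noncomputable def relEntCtx {I J K : Type} [Fintype I] [Fintype J] [Fintype K]
    (S : Scenario I J K) (p : I → J → K → ℝ) : EReal :=
  ⨅ q ∈ {q : I → J → K → ℝ | Noncontextual S q}, DKL p q

/-- ℓ1 distance between behaviors: maximum over preparations and measurements. -/
noncomputable def D1 {I J K : Type} [Fintype I] [Fintype J] [Fintype K]
    (p q : I → J → K → ℝ) : ℝ :=
  ⨆ ij : I × J, ∑ k : K, |p ij.1 ij.2 k - q ij.1 ij.2 k|

/-- The ℓ1-contextuality distance. -/
noncomputable def l1CtxDistance {I J K : Type} [Fintype I] [Fintype J] [Fintype K]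
    (S : Scenario I J K) (p : I → J → K → ℝ) : ℝ :=
  sInf {d : ℝ | ∃ q : I → J → K → ℝ, Noncontextual S q ∧ D1 p q = d}

/-- The uniform ℓ1-contextuality distance. -/
noncomputable def uniformL1CtxDistance {I J K : Type} [Fintype I] [Fintype J] [Fintype K]
    (S : Scenario I J K) (p : I → J → K → ℝ) : ℝ :=
  (1 / (2 * (Fintype.card I : ℝ) * (Fintype.card J : ℝ))) *
    sInf {d : ℝ | ∃ q : I → J → K → ℝ, Noncontextual S q ∧
      ∑ i, ∑ j, ∑ k, |p i j k - q i j k| = d}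

/-- The measurement-assignment polytope of a scenario. -/
def MAPolytope {I J K : Type} [Fintype I] [Fintype J] [Fintype K]
    (S : Scenario I J K) : Set (K × J → ℝ) :=
  {ξ | (∀ kj, 0 ≤ ξ kj) ∧ (∀ j, ∑ k, ξ (k, j) = 1) ∧
    ∀ r, ∑ kj : K × J, ((S.measEq r).1 kj - (S.measEq r).2 kj) * ξ kj = 0}

theorem EReal.coe_finset_sum {α : Type*} (s : Finset α) (f : α → ℝ) :
    ((∑ x ∈ s, f x : ℝ) : EReal) = ∑ x ∈ s, (f x : EReal) :=
  map_sum (⟨⟨Real.toEReal, EReal.coe_zero⟩, EReal.coe_add⟩ : ℝ →+ EReal) f s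

theorem Fintype.sum_prod_mul_eq_sum_mul_sum {R A B : Type*} [CommSemiring R]
    [Fintype A] [Fintype B] (f : A → R) (g : B → R) :
    ∑ x : A × B, f x.1 * g x.2 = (∑ a, f a) * ∑ b, g b := by
  rw [Fintype.sum_mul_sum, Fintype.sum_prod_type]

theorem Fintype.sum_prodProdProdComm_mul {R K1 J1 K2 J2 : Type*} [CommSemiring R]
    [Fintype K1] [Fintype J1] [Fintype K2] [Fintype J2] (f : K1 × J1 → R) (g : K2 × J2 → R) :
    ∑ kj : (K1 × K2) × (J1 × J2), f (kj.1.1, kj.2.1) * g (kj.1.2, kj.2.2)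
      = (∑ x, f x) * ∑ y, g y := by
  rw [← Fintype.sum_prod_mul_eq_sum_mul_sum]
  exact Fintype.sum_equiv (Equiv.prodProdProdComm K1 K2 J1 J2) _ _ fun _ => rfl

section KullbackLeibler

theorem klTerm_ne_bot (p q : ℝ) : klTerm p q ≠ ⊥ := by
  unfold klTerm
  split_ifs
  exacts [EReal.zero_ne_bot, top_ne_bot, EReal.coe_ne_bot _]

theorem klTerm_eq_top {p q : ℝ} (hp : p ≠ 0) (hq : q = 0) : klTerm p q = ⊤ := by
  rw [klTerm, if_neg hp, if_pos hq]

theorem klTerm_eq_coe {p q : ℝ} (h : p ≠ 0 → q ≠ 0) :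
    klTerm p q = ((p * Real.log (p / q) : ℝ) : EReal) := by
  by_cases hp : p = 0
  · simp [klTerm, hp]
  · simp [klTerm, hp, h hp]

theorem coe_sub_le_klTerm {p q : ℝ} (hp : 0 ≤ p) (hq : 0 ≤ q) :
    ((p - q : ℝ) : EReal) ≤ klTerm p q := by
  unfold klTerm
  split_ifs with hp0 hq0
  · exact_mod_cast by linarith
  · exact le_top
  have hpq : 0 < p / q := div_pos (hp.lt_of_ne' hp0) (hq.lt_of_ne' hq0)
  have hlog := mul_le_mul_of_nonneg_left (Real.one_sub_inv_le_log_of_pos hpq) hp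
  rw [inv_div, mul_sub, mul_one, mul_div_cancel₀ _ hp0] at hlog
  exact_mod_cast hlog

theorem sum_klTerm_ne_bot {K : Type*} (p q : K → ℝ) (s : Finset K) :
    ∑ k ∈ s, klTerm (p k) (q k) ≠ ⊥ := by
  classical
  induction s using Finset.induction_on with
  | empty => simp
  | insert k s hk ih =>
    rw [Finset.sum_insert hk]
    exact EReal.add_ne_bot_iff.mpr ⟨klTerm_ne_bot _ _, ih⟩

variable {K K1 K2 : Type*} [Fintype K] [Fintype K1] [Fintype K2]

theorem sum_klTerm_eq_top {p q : K → ℝ} {k : K} (hp : p k ≠ 0) (hq : q k = 0) :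
    ∑ k, klTerm (p k) (q k) = ⊤ := by
  classical
  rw [← Finset.add_sum_erase _ _ (Finset.mem_univ k), klTerm_eq_top hp hq]
  exact EReal.top_add_of_ne_bot (sum_klTerm_ne_bot p q _)

theorem sum_klTerm_eq_coe {p q : K → ℝ} (h : ∀ k, p k ≠ 0 → q k ≠ 0) :
    ∑ k, klTerm (p k) (q k) = ((∑ k, p k * Real.log (p k / q k) : ℝ) : EReal) := by
  rw [EReal.coe_finset_sum]
  exact Finset.sum_congr rfl fun k _ => klTerm_eq_coe (h k)

theorem mul_log_div_mul {p1 q1 p2 q2 : ℝ} (h1 : p1 ≠ 0 → q1 ≠ 0) (h2 : p2 ≠ 0 → q2 ≠ 0) :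
    p1 * p2 * Real.log (p1 * p2 / (q1 * q2))
      = p1 * Real.log (p1 / q1) * p2 + p1 * (p2 * Real.log (p2 / q2)) := by
  rcases eq_or_ne p1 0 with rfl | hp1
  · simp
  rcases eq_or_ne p2 0 with rfl | hp2
  · simp
  rw [mul_div_mul_comm, Real.log_mul (div_ne_zero hp1 (h1 hp1)) (div_ne_zero hp2 (h2 hp2))]
  ring

theorem sum_klTerm_mul_le {p1 q1 : K1 → ℝ} {p2 q2 : K2 → ℝ}
    (hp1 : ∑ k, p1 k = 1) (hp2 : ∑ k, p2 k = 1) :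
    ∑ k : K1 × K2, klTerm (p1 k.1 * p2 k.2) (q1 k.1 * q2 k.2)
      ≤ ∑ k, klTerm (p1 k) (q1 k) + ∑ k, klTerm (p2 k) (q2 k) := by
  by_cases h1 : ∀ k, p1 k ≠ 0 → q1 k ≠ 0
  swap
  · push Not at h1
    obtain ⟨k, hp, hq⟩ := h1
    rw [sum_klTerm_eq_top hp hq, EReal.top_add_of_ne_bot (sum_klTerm_ne_bot _ _ _)]
    exact le_top
  by_cases h2 : ∀ k, p2 k ≠ 0 → q2 k ≠ 0
  swap
  · push Not at h2
    obtain ⟨k, hp, hq⟩ := h2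
    rw [sum_klTerm_eq_top hp hq, EReal.add_top_of_ne_bot (sum_klTerm_ne_bot _ _ _)]
    exact le_top
  have h12 (k : K1 × K2) : p1 k.1 * p2 k.2 ≠ 0 → q1 k.1 * q2 k.2 ≠ 0 := fun hk =>
    mul_ne_zero (h1 _ (left_ne_zero_of_mul hk)) (h2 _ (right_ne_zero_of_mul hk))
  rw [sum_klTerm_eq_coe h1, sum_klTerm_eq_coe h2, sum_klTerm_eq_coe h12, ← EReal.coe_add,
    EReal.coe_le_coe_iff]
  simp only [mul_log_div_mul (h1 _) (h2 _), Finset.sum_add_distrib, Fintype.sum_prod_type,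
    ← Finset.mul_sum, ← Finset.sum_mul, hp1, hp2, mul_one, one_mul, le_refl]

end KullbackLeibler

section Behaviors

variable {I J K I1 J1 K1 I2 J2 K2 : Type} [Fintype I] [Fintype J] [Fintype K]
  [Fintype I1] [Fintype J1] [Fintype K1] [Fintype I2] [Fintype J2] [Fintype K2]

theorem DKL_nonneg [Nonempty I] [Nonempty J] {p q : I → J → K → ℝ}
    (hp : IsBehavior p) (hq : IsBehavior q) : 0 ≤ DKL p q := by
  obtain ⟨i⟩ := ‹Nonempty I›
  obtain ⟨j⟩ := ‹Nonempty J›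
  refine le_iSup₂_of_le (f := fun i j => ∑ k, klTerm (p i j k) (q i j k)) i j ?_
  calc (0 : EReal) = ((∑ k, (p i j k - q i j k) : ℝ) : EReal) := by
        rw [Finset.sum_sub_distrib, hp.2, hq.2, sub_self, EReal.coe_zero]
    _ ≤ ∑ k, klTerm (p i j k) (q i j k) := by
        rw [EReal.coe_finset_sum]
        exact Finset.sum_le_sum fun k _ => coe_sub_le_klTerm (hp.1 i j k) (hq.1 i j k)

theorem DKL_prodBehavior_le {p1 q1 : I1 → J1 → K1 → ℝ} {p2 q2 : I2 → J2 → K2 → ℝ}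
    (hp1 : IsBehavior p1) (hp2 : IsBehavior p2) :
    DKL (prodBehavior p1 p2) (prodBehavior q1 q2) ≤ DKL p1 q1 + DKL p2 q2 :=
  iSup₂_le fun i j => (sum_klTerm_mul_le (hp1.2 i.1 j.1) (hp2.2 i.2 j.2)).trans <|
    add_le_add (le_iSup₂ (f := fun i j => ∑ k, klTerm (p1 i j k) (q1 i j k)) i.1 j.1)
      (le_iSup₂ (f := fun i j => ∑ k, klTerm (p2 i j k) (q2 i j k)) i.2 j.2)

end Behaviors

section OntologicalModel

variable {I J K I1 J1 K1 I2 J2 K2 : Type} [Fintype I] [Fintype J] [Fintype K]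
  [Fintype I1] [Fintype J1] [Fintype K1] [Fintype I2] [Fintype J2] [Fintype K2]

/-- A noncontextual ontological model of `p` over an arbitrary finite ontic space `Λ`
(`Noncontextual` asks for one over some `Fin n`). -/
structure NCModel (S : Scenario I J K) (p : I → J → K → ℝ) (Λ : Type) [Fintype Λ] where
  μ : I → Λ → ℝ
  ξ : Λ → J → K → ℝ
  μ_dist : ∀ i, IsDist (μ i)
  ξ_dist : ∀ l j, IsDist (ξ l j)
  eq_sum : ∀ i j k, p i j k = ∑ l, ξ l j k * μ i l
  prep_indep : ∀ s l, ∑ i, ((S.prepEq s).1 i - (S.prepEq s).2 i) * μ i l = 0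
  meas_indep : ∀ r l, ∑ kj : K × J, ((S.measEq r).1 kj - (S.measEq r).2 kj) * ξ l kj.2 kj.1 = 0

namespace NCModel

variable {S : Scenario I J K} {p : I → J → K → ℝ} {Λ Λ1 Λ2 : Type} [Fintype Λ] [Fintype Λ1]
  [Fintype Λ2]

theorem noncontextual (M : NCModel S p Λ) : Noncontextual S p := by
  let e := (Fintype.equivFin Λ).symm
  refine ⟨Fintype.card Λ, fun i l => M.μ i (e l), fun l => M.ξ (e l), fun i => ⟨?_, ?_⟩,
    fun l => M.ξ_dist (e l), fun i j k => ?_, fun s l => M.prep_indep s (e l),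
    fun r l => M.meas_indep r (e l)⟩
  · exact fun l => (M.μ_dist i).1 (e l)
  · rw [e.sum_comp (M.μ i), (M.μ_dist i).2]
  · rw [e.sum_comp (fun l => M.ξ l j k * M.μ i l), M.eq_sum]

theorem isBehavior (M : NCModel S p Λ) : IsBehavior p := by
  refine ⟨fun i j k => ?_, fun i j => ?_⟩
  · rw [M.eq_sum]
    exact Finset.sum_nonneg fun l _ => mul_nonneg ((M.ξ_dist l j).1 k) ((M.μ_dist i).1 l)
  · simp only [M.eq_sum]
    rw [Finset.sum_comm]
    simp only [← Finset.sum_mul, (M.ξ_dist _ j).2, one_mul, (M.μ_dist i).2]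

def prod {S1 : Scenario I1 J1 K1} {S2 : Scenario I2 J2 K2}
    {p1 : I1 → J1 → K1 → ℝ} {p2 : I2 → J2 → K2 → ℝ}
    (M1 : NCModel S1 p1 Λ1) (M2 : NCModel S2 p2 Λ2) :
    NCModel (S1.prod S2) (prodBehavior p1 p2) (Λ1 × Λ2) where
  μ i l := M1.μ i.1 l.1 * M2.μ i.2 l.2
  ξ l j k := M1.ξ l.1 j.1 k.1 * M2.ξ l.2 j.2 k.2
  μ_dist i := isDist_prodFun (M1.μ_dist i.1) (M2.μ_dist i.2)
  ξ_dist l j := isDist_prodFun (M1.ξ_dist l.1 j.1) (M2.ξ_dist l.2 j.2)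
  eq_sum i j k := by
    rw [prodBehavior, M1.eq_sum, M2.eq_sum, ← Fintype.sum_prod_mul_eq_sum_mul_sum]
    exact Finset.sum_congr rfl fun l _ => by ring
  prep_indep
    | .inl (s, γ), l => by
      rw [← zero_mul (∑ i, γ.1 i * M2.μ i l.2), ← M1.prep_indep s l.1,
        ← Fintype.sum_prod_mul_eq_sum_mul_sum]
      exact Finset.sum_congr rfl fun i _ => by simp only [Scenario.prod]; ring
    | .inr (s, γ), l => by
      rw [← mul_zero (∑ i, γ.1 i * M1.μ i l.1), ← M2.prep_indep s l.2,
        ← Fintype.sum_prod_mul_eq_sum_mul_sum]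
      exact Finset.sum_congr rfl fun i _ => by simp only [Scenario.prod]; ring
  meas_indep
    | .inl (r, γ), l => by
      rw [← zero_mul (∑ kj, γ.1 kj * M2.ξ l.2 kj.2 kj.1), ← M1.meas_indep r l.1,
        ← Fintype.sum_prodProdProdComm_mul]
      exact Finset.sum_congr rfl fun kj _ => by simp only [Scenario.prod]; ring
    | .inr (r, γ), l => by
      rw [← mul_zero (∑ kj, γ.1 kj * M1.ξ l.1 kj.2 kj.1), ← M2.meas_indep r l.2,
        ← Fintype.sum_prodProdProdComm_mul]
      exact Finset.sum_congr rfl fun kj _ => by simp only [Scenario.prod]; ring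

end NCModel

theorem Noncontextual.exists_ncModel {S : Scenario I J K} {p : I → J → K → ℝ}
    (h : Noncontextual S p) : ∃ n, Nonempty (NCModel S p (Fin n)) := by
  obtain ⟨n, μ, ξ, hμ, hξ, heq, hprep, hmeas⟩ := h
  exact ⟨n, ⟨⟨μ, ξ, hμ, hξ, heq, hprep, hmeas⟩⟩⟩

theorem Noncontextual.isBehavior {S : Scenario I J K} {p : I → J → K → ℝ}
    (h : Noncontextual S p) : IsBehavior p := by
  obtain ⟨_, ⟨M⟩⟩ := h.exists_ncModel
  exact M.isBehavior

theorem Noncontextual.prod {S1 : Scenario I1 J1 K1} {S2 : Scenario I2 J2 K2}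
    {q1 : I1 → J1 → K1 → ℝ} {q2 : I2 → J2 → K2 → ℝ}
    (h1 : Noncontextual S1 q1) (h2 : Noncontextual S2 q2) :
    Noncontextual (S1.prod S2) (prodBehavior q1 q2) := by
  obtain ⟨_, ⟨M1⟩⟩ := h1.exists_ncModel
  obtain ⟨_, ⟨M2⟩⟩ := h2.exists_ncModel
  exact (M1.prod M2).noncontextual

end OntologicalModel

section RelativeEntropy

variable {I J K : Type} [Fintype I] [Fintype J] [Fintype K] (S : Scenario I J K)
  {p q : I → J → K → ℝ}

theorem relEntCtx_le_DKL (hq : Noncontextual S q) : relEntCtx S p ≤ DKL p q :=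
  iInf₂_le q hq

theorem exists_DKL_lt_of_relEntCtx_lt {a : EReal} (h : relEntCtx S p < a) :
    ∃ q, Noncontextual S q ∧ DKL p q < a := by
  simpa only [relEntCtx, iInf_lt_iff, exists_prop, Set.mem_ofPred_eq] using h

theorem relEntCtx_nonneg [Nonempty I] [Nonempty J] (hp : IsBehavior p) : 0 ≤ relEntCtx S p :=
  le_iInf₂ fun _ hq => DKL_nonneg hp (Noncontextual.isBehavior hq)

end RelativeEntropy

theorem relEntCtx_subadditive_general
    {I1 J1 K1 I2 J2 K2 : Type}
    [Fintype I1] [Fintype J1] [Fintype K1] [Fintype I2] [Fintype J2] [Fintype K2]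
    [Nonempty I1] [Nonempty J1] [Nonempty I2] [Nonempty J2]
    (S1 : Scenario I1 J1 K1) (S2 : Scenario I2 J2 K2)
    (p1 : I1 → J1 → K1 → ℝ) (p2 : I2 → J2 → K2 → ℝ)
    (hp1 : IsBehavior p1) (hp2 : IsBehavior p2) :
    relEntCtx (S1.prod S2) (prodBehavior p1 p2)
      ≤ relEntCtx S1 p1 + relEntCtx S2 p2 := by
  have hne1 : relEntCtx S1 p1 ≠ ⊥ :=
    ne_bot_of_le_ne_bot EReal.zero_ne_bot (relEntCtx_nonneg S1 hp1)
  have hne2 : relEntCtx S2 p2 ≠ ⊥ :=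
    ne_bot_of_le_ne_bot EReal.zero_ne_bot (relEntCtx_nonneg S2 hp2)
  refine EReal.le_add_of_forall_gt (.inl hne1) (.inr hne2) fun a ha b hb => ?_
  obtain ⟨q1, hq1, hlt1⟩ := exists_DKL_lt_of_relEntCtx_lt S1 ha
  obtain ⟨q2, hq2, hlt2⟩ := exists_DKL_lt_of_relEntCtx_lt S2 hb
  calc relEntCtx (S1.prod S2) (prodBehavior p1 p2)
      ≤ DKL (prodBehavior p1 p2) (prodBehavior q1 q2) := relEntCtx_le_DKL _ (hq1.prod hq2)
    _ ≤ DKL p1 q1 + DKL p2 q2 := DKL_prodBehavior_le hp1 hp2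
    _ ≤ a + b := add_le_add hlt1.le hlt2.le

/-- the relative entropy of contextuality is subadditive under
independent juxtapositions. -/
theorem relEntCtx_subadditive
    {I1 J1 K1 I2 J2 K2 : Type}
    [Fintype I1] [Fintype J1] [Fintype K1] [Fintype I2] [Fintype J2] [Fintype K2]
    [Nonempty I1] [Nonempty J1] [Nonempty K1] [Nonempty I2] [Nonempty J2] [Nonempty K2]
    (S1 : Scenario I1 J1 K1) (S2 : Scenario I2 J2 K2)
    (p1 : I1 → J1 → K1 → ℝ) (p2 : I2 → J2 → K2 → ℝ)
    (hp1 : IsBehavior p1) (hp2 : IsBehavior p2)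
    (h1 : {q : I1 → J1 → K1 → ℝ | Noncontextual S1 q}.Nonempty)
    (h2 : {q : I2 → J2 → K2 → ℝ | Noncontextual S2 q}.Nonempty)
    (h12 : {q : I1 × I2 → J1 × J2 → K1 × K2 → ℝ |
        Noncontextual (S1.prod S2) q}.Nonempty) :
    relEntCtx (S1.prod S2) (prodBehavior p1 p2)
      ≤ relEntCtx S1 p1 + relEntCtx S2 p2 :=
  relEntCtx_subadditive_general S1 S2 p1 p2 hp1 hp2
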